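/- For every integer m ≥ 4, the achromatic number of the Roichman Rectangle R_m satisfies 8(m−2) ≤ Ψ(R_m) ≤ 8m−10. -/

import Mathlib

/-- The rectangular grid graph `R_{m×n}`: vertices are pairs `(i,j)` with
`i < m`, `j < n`, adjacent iff they differ by exactly one in exactly one
coordinate. -/
def gridGraph (m n : ℕ) : SimpleGraph (Fin m × Fin n) where
  Adj p q := (p.1 = q.1 ∧ ((p.2 : ℕ) + 1 = q.2 ∨ (q.2 : ℕ) + 1 = p.2)) ∨
             (p.2 = q.2 ∧ ((p.1 : ℕ) + 1 = q.1 ∨ (q.1 : ℕ) + 1 = p.1))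
  symm := by
    constructor
    rintro p q (⟨h, h'⟩ | ⟨h, h'⟩)
    · exact Or.inl ⟨h.symm, h'.symm⟩
    · exact Or.inr ⟨h.symm, h'.symm⟩
  loopless := by
    constructor
    rintro p (⟨_, h | h⟩ | ⟨_, h | h⟩) <;> omega

/-- `c` is a `k`-complete coloring of `G`: every pair of distinct colors appears
on some edge. -/
def IsCompleteColoring {V : Type*} (G : SimpleGraph V) (k : ℕ) (c : V → Fin k) : Prop :=
  ∀ i j : Fin k, i ≠ j → ∃ u v, G.Adj u v ∧ c u = i ∧ c v = j

/-- `c` is a `k`-complete proper coloring of `G`. -/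
def IsCompleteProperColoring {V : Type*} (G : SimpleGraph V) (k : ℕ) (c : V → Fin k) : Prop :=
  IsCompleteColoring G k c ∧ ∀ u v, G.Adj u v → c u ≠ c v

/-- The complete coloring number `Γ(G)`: the maximum `k` admitting a
`k`-complete coloring. -/
noncomputable def completeColoringNumber {V : Type*} (G : SimpleGraph V) : ℕ :=
  sSup {k | ∃ c : V → Fin k, IsCompleteColoring G k c}

/-- The achromatic number `Ψ(G)`: the maximum `k` admitting a `k`-complete
proper coloring. -/
noncomputable def achromaticNumber {V : Type*} (G : SimpleGraph V) : ℕ :=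
  sSup {k | ∃ c : V → Fin k, IsCompleteProperColoring G k c}

/-!
Upper bound: a complete colouring with `k` colours needs a separate edge for each of the
`k(k-1)/2` pairs of colours, and the `N × m` grid, the box product of two paths, has
`m(N-1) + N(m-1)` edges; for `N = 16(m-2)+2` this forces `k ≤ 8m-10`.

Lower bound: with `q = m - 2` and `k = 8q` colours in `ℤ/k`, colour the cell `(i, j)` by
`⌊i/2⌋ + (e₀ + ⋯ + e_{j-1}) + [i odd](2j+2)`. Since `⌊i/2⌋` runs through every residue down a
column, a difference realized on one edge of a given kind is realized from every base colour, so
the colouring is complete as soon as every nonzero residue is, up to sign, one of its steps. The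
vertical steps of column `j` are `2j+1` and `2j+2`, covering `1, …, 2q+4`; the horizontal steps
`e_j, e_j + 2` with `e_j = 2q+5+2j-(j mod 2)` cover `2q+5, …, 4q`, consecutive columns pairing
up into blocks of four consecutive integers. All steps lie strictly between `0` and `k`, so the
colouring is also proper.
-/

open Finset SimpleGraph

open scoped Fin.NatCast

section Counting

variable {V : Type*} [Fintype V] {G : SimpleGraph V} [DecidableRel G.Adj]

theorem IsCompleteColoring.mul_pred_le_two_mul_card_edgeFinset {k : ℕ} {c : V → Fin k}
    (hc : IsCompleteColoring G k c) : k * (k - 1) ≤ 2 * #G.edgeFinset := by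
  classical
  have hdart : ∀ p : (univ : Finset (Fin k)).offDiag, ∃ d : G.Dart,
      c d.fst = p.1.1 ∧ c d.snd = p.1.2 := fun ⟨⟨i, j⟩, hp⟩ ↦ by
    obtain ⟨u, v, huv, hu, hv⟩ := hc i j (mem_offDiag.mp hp).2.2
    exact ⟨⟨(u, v), huv⟩, hu, hv⟩
  choose d hd using hdart
  have hcd : (fun d : G.Dart ↦ (c d.fst, c d.snd)) ∘ d = Subtype.val :=
    funext fun p ↦ Prod.ext (hd p).1 (hd p).2
  calc k * (k - 1) = Fintype.card (univ : Finset (Fin k)).offDiag := by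
        rw [Fintype.card_coe, offDiag_card, card_univ, Fintype.card_fin, Nat.mul_sub_one]
    _ ≤ Fintype.card G.Dart :=
        Fintype.card_le_of_injective d (Function.Injective.of_comp (hcd ▸ Subtype.val_injective))
    _ = 2 * #G.edgeFinset := G.dart_card_eq_twice_card_edges

end Counting

theorem bddAbove_setOf_isCompleteColoring {V : Type*} [Finite V] {G : SimpleGraph V} :
    BddAbove {k | ∃ c : V → Fin k, IsCompleteColoring G k c} := by
  have := Fintype.ofFinite V
  classical
  refine ⟨2 * #G.edgeFinset + 1, fun k ⟨_, hc⟩ ↦ ?_⟩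
  have := hc.mul_pred_le_two_mul_card_edgeFinset
  rcases k with _ | k
  · omega
  · simp only [Nat.add_sub_cancel] at this; nlinarith

theorem SimpleGraph.card_edgeFinset_boxProd {α β : Type*} [Fintype α] [Fintype β]
    (G : SimpleGraph α) (H : SimpleGraph β) [DecidableRel G.Adj] [DecidableRel H.Adj]
    [DecidableRel (G □ H).Adj] :
    #(G □ H).edgeFinset = Fintype.card β * #G.edgeFinset + Fintype.card α * #H.edgeFinset := by
  have h : 2 * #(G □ H).edgeFinset =
      2 * (Fintype.card β * #G.edgeFinset + Fintype.card α * #H.edgeFinset) :=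
    calc 2 * #(G □ H).edgeFinset = ∑ x, (G □ H).degree x := by
          convert (G □ H).sum_degrees_eq_twice_card_edges.symm
      _ = ∑ x : α × β, (G.degree x.1 + H.degree x.2) :=
          sum_congr rfl fun x _ ↦ degree_boxProd x
      _ = Fintype.card β * ∑ a, G.degree a + Fintype.card α * ∑ b, H.degree b := by
          rw [Fintype.sum_prod_type' (f := fun a b ↦ G.degree a + H.degree b)]
          simp only [sum_add_distrib, sum_const, card_univ, smul_eq_mul, mul_sum]
      _ = _ := by
          rw [G.sum_degrees_eq_twice_card_edges, H.sum_degrees_eq_twice_card_edges]; ring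
  omega

theorem SimpleGraph.card_edgeFinset_pathGraph (n : ℕ) [DecidableRel (pathGraph n).Adj] :
    #(pathGraph n).edgeFinset = n - 1 := by
  rcases n with _ | n
  · rw [card_eq_zero, edgeFinset_eq_empty]
    ext u
    exact u.elim0
  have h : (pathGraph (n + 1)).edgeFinset = univ.image fun i : Fin n ↦ s(i.castSucc, i.succ) := by
    ext e
    induction e using Sym2.ind with
    | h u v =>
      simp only [mem_edgeFinset, mem_edgeSet, pathGraph_adj, mem_image, mem_univ, true_and,
        Sym2.eq_iff, Fin.ext_iff, Fin.val_castSucc, Fin.val_succ]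
      constructor
      · rintro (h | h)
        · exact ⟨⟨u, by omega⟩, Or.inl ⟨rfl, h⟩⟩
        · exact ⟨⟨v, by omega⟩, Or.inr ⟨rfl, h⟩⟩
      · rintro ⟨i, h | h⟩ <;> omega
  rw [h, card_image_of_injective, card_univ, Fintype.card_fin, Nat.add_sub_cancel]
  intro i j hij
  simp only [Sym2.eq_iff, Fin.ext_iff, Fin.val_castSucc, Fin.val_succ] at hij
  omega

theorem gridGraph_eq_boxProd (N m : ℕ) :
    gridGraph N m = pathGraph N □ pathGraph m := by
  ext p q
  simp only [gridGraph, boxProd_adj, pathGraph_adj]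
  tauto

theorem card_edgeFinset_gridGraph (N m : ℕ) [DecidableRel (gridGraph N m).Adj] :
    #(gridGraph N m).edgeFinset = m * (N - 1) + N * (m - 1) := by
  classical
  have h := card_edgeFinset_boxProd (pathGraph N) (pathGraph m)
  simp only [card_edgeFinset_pathGraph, Fintype.card_fin] at h
  convert h using 3
  exact gridGraph_eq_boxProd N m

section Achromatic

variable {V : Type*} {G : SimpleGraph V}

theorem bddAbove_setOf_isCompleteProperColoring [Finite V] :
    BddAbove {k | ∃ c : V → Fin k, IsCompleteProperColoring G k c} := by
  refine (bddAbove_setOf_isCompleteColoring (G := G)).mono ?_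
  rintro k ⟨c, hc⟩
  exact ⟨c, hc.1⟩

theorem le_achromaticNumber [Finite V] {k : ℕ} {c : V → Fin k}
    (hc : IsCompleteProperColoring G k c) : k ≤ achromaticNumber G :=
  le_csSup bddAbove_setOf_isCompleteProperColoring ⟨c, hc⟩

theorem achromaticNumber_mul_pred_le [Fintype V] [DecidableRel G.Adj] :
    achromaticNumber G * (achromaticNumber G - 1) ≤ 2 * #G.edgeFinset := by
  rcases Set.eq_empty_or_nonempty {k | ∃ c : V → Fin k, IsCompleteProperColoring G k c} with h | h
  · simp [achromaticNumber, h]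
  · obtain ⟨c, hc⟩ := Nat.sSup_mem h bddAbove_setOf_isCompleteProperColoring
    exact hc.1.mul_pred_le_two_mul_card_edgeFinset

end Achromatic

section DifferenceColoring

variable {V : Type*} {G : SimpleGraph V} {k : ℕ} [NeZero k]

def RealizesDifference (G : SimpleGraph V) (c : V → Fin k) (d : Fin k) : Prop :=
  ∀ a, ∃ u v, G.Adj u v ∧ c u = a ∧ c v = a + d

theorem isCompleteColoring_of_realizesDifference {c : V → Fin k}
    (h : ∀ d ≠ 0, RealizesDifference G c d ∨ RealizesDifference G c (-d)) :
    IsCompleteColoring G k c := by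
  intro i j hij
  rcases h (j - i) (sub_ne_zero.mpr hij.symm) with h | h
  · obtain ⟨u, v, huv, hu, hv⟩ := h i
    exact ⟨u, v, huv, hu, by rw [hv, add_sub_cancel]⟩
  · obtain ⟨u, v, huv, hu, hv⟩ := h j
    exact ⟨v, u, huv.symm, by rw [hv, neg_sub, add_sub_cancel], hu⟩

theorem realizesDifference_natCast {f : V → ℕ} (s x : ℕ)
    (h : ∀ t < k, ∃ u v, G.Adj u v ∧ f u = t + s ∧ f v = f u + x) :
    RealizesDifference G (fun v ↦ (f v : Fin k)) (x : Fin k) := by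
  intro a
  obtain ⟨u, v, huv, hu, hv⟩ := h (a - (s : Fin k)).val (a - (s : Fin k)).isLt
  have hu' : (f u : Fin k) = a := by rw [hu, Nat.cast_add, Fin.cast_val_eq_self, sub_add_cancel]
  exact ⟨u, v, huv, hu', by simp only [hv, Nat.cast_add, hu']⟩

end DifferenceColoring

section StairColoring

variable (e : ℕ → ℕ)

def stairColor (i j : ℕ) : ℕ := i / 2 + ∑ l ∈ range j, e l + i % 2 * (2 * j + 2)

theorem stairColor_two_mul_add (t i j : ℕ) :
    stairColor e (2 * t + i) j = t + stairColor e i j := by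
  rw [stairColor, stairColor, show (2 * t + i) / 2 = t + i / 2 by omega,
    show (2 * t + i) % 2 = i % 2 by omega]
  ring

theorem stairColor_two_mul_add_one (t j : ℕ) :
    stairColor e (2 * t + 1) j = stairColor e (2 * t) j + (2 * j + 2) := by
  rw [stairColor_two_mul_add, ← add_zero (2 * t), stairColor_two_mul_add]
  simp only [stairColor]
  omega

theorem stairColor_two_mul_add_one' (t j : ℕ) :
    stairColor e (2 * t + 1) j = stairColor e (2 * t + 2) j + (2 * j + 1) := by
  rw [stairColor_two_mul_add, stairColor_two_mul_add]
  simp only [stairColor]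
  omega

theorem stairColor_succ_right (i j : ℕ) :
    stairColor e i (j + 1) = stairColor e i j + (e j + 2 * (i % 2)) := by
  simp only [stairColor, sum_range_succ]; ring

def gridSteps (m : ℕ) : Set ℕ :=
  {x | (∃ j < m, x = 2 * j + 1 ∨ x = 2 * j + 2) ∨ ∃ j, j + 1 < m ∧ (x = e j ∨ x = e j + 2)}

theorem exists_mem_gridSteps_of_adj {N m : ℕ} {p q : Fin N × Fin m}
    (h : (gridGraph N m).Adj p q) : ∃ x ∈ gridSteps e m,
      stairColor e q.1 q.2 = stairColor e p.1 p.2 + x ∨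
      stairColor e p.1 p.2 = stairColor e q.1 q.2 + x := by
  suffices key : ∀ {p q : Fin N × Fin m},
      p.1 = q.1 ∧ (p.2 : ℕ) + 1 = q.2 ∨ p.2 = q.2 ∧ (p.1 : ℕ) + 1 = q.1 → ∃ x ∈ gridSteps e m,
        stairColor e q.1 q.2 = stairColor e p.1 p.2 + x ∨
        stairColor e p.1 p.2 = stairColor e q.1 q.2 + x by
    rcases h with ⟨h1, h2 | h2⟩ | ⟨h1, h2 | h2⟩
    · exact key (.inl ⟨h1, h2⟩)
    · obtain ⟨x, hx, hpq⟩ := key (.inl ⟨h1.symm, h2⟩); exact ⟨x, hx, hpq.symm⟩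
    · exact key (.inr ⟨h1, h2⟩)
    · obtain ⟨x, hx, hpq⟩ := key (.inr ⟨h1.symm, h2⟩); exact ⟨x, hx, hpq.symm⟩
  rintro ⟨i, j⟩ ⟨i', j'⟩ (⟨rfl, hj⟩ | ⟨rfl, hi⟩)
  · dsimp only at hj ⊢
    refine ⟨e j + 2 * (i % 2), .inr ⟨j, hj ▸ j'.isLt, by omega⟩, .inl ?_⟩
    rw [← hj, stairColor_succ_right]
  · dsimp only at hi ⊢
    obtain ⟨t, ht | ht⟩ : ∃ t, (i : ℕ) = 2 * t ∨ (i : ℕ) = 2 * t + 1 := ⟨i / 2, by omega⟩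
    · refine ⟨2 * j + 2, .inl ⟨j, j.isLt, .inr rfl⟩, .inl ?_⟩
      rw [← hi, ht, stairColor_two_mul_add_one]
    · refine ⟨2 * j + 1, .inl ⟨j, j.isLt, .inl rfl⟩, .inr ?_⟩
      rw [← hi, ht, stairColor_two_mul_add_one']

variable (k : ℕ) [NeZero k]

def stairColoring {N m : ℕ} (p : Fin N × Fin m) : Fin k := (stairColor e p.1 p.2 : Fin k)

theorem stairColoring_ne_of_adj {N m : ℕ} (hsteps : ∀ x ∈ gridSteps e m, ¬ k ∣ x)
    {p q : Fin N × Fin m} (h : (gridGraph N m).Adj p q) :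
    stairColoring e k p ≠ stairColoring e k q := by
  obtain ⟨x, hx, hpq | hpq⟩ := exists_mem_gridSteps_of_adj e h <;>
  · simp only [stairColoring, hpq, Nat.cast_add, ne_eq, add_eq_left,
      left_eq_add, Fin.natCast_eq_zero]
    exact hsteps x hx

theorem realizesDifference_stairColoring {N m x : ℕ} (hN : 2 * k < N) (hx : x ∈ gridSteps e m) :
    RealizesDifference (gridGraph N m) (stairColoring e k) x := by
  rcases hx with ⟨j, hj, rfl | rfl⟩ | ⟨j, hj, hx⟩
  · refine realizesDifference_natCast (stairColor e 2 j) _ fun t ht ↦ ?_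
    refine ⟨(⟨2 * t + 2, by omega⟩, ⟨j, hj⟩), (⟨2 * t + 1, by omega⟩, ⟨j, hj⟩),
      .inr ⟨rfl, .inr rfl⟩, stairColor_two_mul_add e t 2 j, stairColor_two_mul_add_one' e t j⟩
  · refine realizesDifference_natCast (stairColor e 0 j) _ fun t ht ↦ ?_
    refine ⟨(⟨2 * t, by omega⟩, ⟨j, by omega⟩), (⟨2 * t + 1, by omega⟩, ⟨j, hj⟩),
      .inr ⟨rfl, .inl rfl⟩, stairColor_two_mul_add e t 0 j, stairColor_two_mul_add_one e t j⟩
  · obtain ⟨r, hr, rfl⟩ : ∃ r < 2, x = e j + 2 * r := by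
      rcases hx with rfl | rfl
      exacts [⟨0, by omega, rfl⟩, ⟨1, by omega, rfl⟩]
    refine realizesDifference_natCast (stairColor e r j) _ fun t ht ↦ ?_
    refine ⟨(⟨2 * t + r, by omega⟩, ⟨j, by omega⟩), (⟨2 * t + r, by omega⟩, ⟨j + 1, hj⟩),
      .inl ⟨rfl, .inl rfl⟩, stairColor_two_mul_add e t r j, ?_⟩
    rw [stairColor_succ_right, show (2 * t + r) % 2 = r by omega]

end StairColoring

theorem isCompleteProperColoring_stairColoring {N m k : ℕ} [NeZero k] (e : ℕ → ℕ)
    (hN : 2 * k < N) (hsteps : ∀ x ∈ gridSteps e m, ¬ k ∣ x)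
    (hcover : ∀ δ, 0 < δ → δ < k → δ ∈ gridSteps e m ∨ k - δ ∈ gridSteps e m) :
    IsCompleteProperColoring (gridGraph N m) k (stairColoring e k) := by
  refine ⟨isCompleteColoring_of_realizesDifference fun d hd ↦ ?_,
    fun _ _ ↦ stairColoring_ne_of_adj e k hsteps⟩
  have hd0 : 0 < d.val := Fin.pos_iff_ne_zero.mpr hd
  rcases hcover d.val hd0 d.isLt with h | h
  · left
    simpa only [Fin.cast_val_eq_self] using realizesDifference_stairColoring e k hN h
  · right
    have hneg : ((k - d.val : ℕ) : Fin k) = -d := Fin.ext (by simp [Fin.neg_def])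
    simpa only [hneg] using realizesDifference_stairColoring e k hN h

def roichmanStep (q j : ℕ) : ℕ := 2 * q + 5 + 2 * j - j % 2

theorem not_dvd_of_mem_gridSteps_roichmanStep {q x : ℕ} (hq : 2 ≤ q)
    (hx : x ∈ gridSteps (roichmanStep q) (q + 2)) : ¬ 8 * q ∣ x := by
  simp only [gridSteps, roichmanStep, Set.mem_ofPred_eq] at hx
  refine Nat.not_dvd_of_pos_of_lt ?_ ?_ <;> omega

theorem mem_gridSteps_roichmanStep {q δ : ℕ} (hδ : 0 < δ) (hδq : δ ≤ 4 * q) :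
    δ ∈ gridSteps (roichmanStep q) (q + 2) := by
  by_cases hsmall : δ ≤ 2 * q + 4
  · exact .inl ⟨(δ - 1) / 2, by omega, by omega⟩
  · set r := δ - (2 * q + 5)
    refine .inr ⟨2 * (r / 4) + r % 2, by omega, ?_⟩
    simp only [roichmanStep]
    omega

theorem exists_isCompleteProperColoring_roichman {q : ℕ} (hq : 2 ≤ q) :
    ∃ c, IsCompleteProperColoring (gridGraph (16 * q + 2) (q + 2)) (8 * q) c := by
  have : NeZero (8 * q) := ⟨by omega⟩
  refine ⟨_, isCompleteProperColoring_stairColoring (roichmanStep q) (by omega)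
    (fun x hx ↦ not_dvd_of_mem_gridSteps_roichmanStep hq hx) fun δ hδ hδk ↦ ?_⟩
  by_cases h : δ ≤ 4 * q
  · exact .inl (mem_gridSteps_roichmanStep hδ h)
  · exact .inr (mem_gridSteps_roichmanStep (by omega) (by omega))

/-- For `m ≥ 4` and `N = 16(m−2)+2`, the Roichman Rectangle (the `N×m` grid)
satisfies `8(m−2) ≤ Ψ(R_m) ≤ 8m − 10`. -/
theorem achromatic_roichman_rectangle (m : ℕ) (hm : 4 ≤ m) (N : ℕ)
    (hN : N = 16 * (m - 2) + 2) :
    8 * (m - 2) ≤ achromaticNumber (gridGraph N m) ∧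
    achromaticNumber (gridGraph N m) ≤ 8 * m - 10 := by
  obtain ⟨q, rfl⟩ : ∃ q, m = q + 2 := ⟨m - 2, by omega⟩
  rw [Nat.add_sub_cancel] at hN ⊢
  subst hN
  constructor
  · obtain ⟨c, hc⟩ := exists_isCompleteProperColoring_roichman (show 2 ≤ q by omega)
    exact le_achromaticNumber hc
  · classical
    set Ψ := achromaticNumber (gridGraph (16 * q + 2) (q + 2))
    have h : Ψ * (Ψ - 1) ≤ 2 * ((q + 2) * (16 * q + 1) + (16 * q + 2) * (q + 1)) :=
      card_edgeFinset_gridGraph (16 * q + 2) (q + 2) ▸ achromaticNumber_mul_pred_le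
    by_contra! hlt
    have : (8 * q + 7) * (8 * q + 6) ≤ Ψ * (Ψ - 1) := Nat.mul_le_mul (by omega) (by omega)
    nlinarith
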